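/- arXiv:1005.2679 — 2 statements merged into one kernel-verified Lean document; each statement's English description precedes it below -/
import Mathlib

section
/- Let E be a complex vector space of dimension n with Kähler form ω, let p,q ≥ 0 with p+q ≤ n, and let Ω ∈ V^{n−p−q,n−p−q}_ℝ. Assume there is a continuous family Ω_t ∈ V^{n−p−q,n−p−q}_ℝ, 0 ≤ t ≤ 1, with Ω_0 = Ω and Ω_1 = ω^{n−p−q}, such that for r ∈ {0,1} and every 0 ≤ t ≤ 1 the map α ↦ Ω_t∧ω^{2r}∧α is an isomorphism from V^{p−r,q−r} onto V^{n−q+r,n−p+r}. Then V^{p,q} splits into the direct sum V^{p,q} = P^{p,q} ⊕ (ω∧V^{p−1,q−1}), and this decomposition is orthogonal with respect to the Hermitian form Q. -/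
noncomputable section

namespace DNHodge



open scoped BigOperators

/-- The model space of constant-coefficient complex forms on a complex vector space `E`
of dimension `n`: the exterior algebra on generators `dz i` (for `Sum.inl i`) and
`dz̄ i` (for `Sum.inr i`). -/
abbrev Forms (n : ℕ) : Type := ExteriorAlgebra ℂ ((Fin n ⊕ Fin n) → ℂ)

def dz (n : ℕ) (i : Fin n) : Forms n := ExteriorAlgebra.ι ℂ (Pi.single (Sum.inl i) (1 : ℂ))

def dzbar (n : ℕ) (i : Fin n) : Forms n := ExteriorAlgebra.ι ℂ (Pi.single (Sum.inr i) (1 : ℂ))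

/-- The space `V^{p,q} = Λ^p E ⊗ Λ^q Ē` of `(p,q)`-forms; it is `0` unless `0 ≤ p,q ≤ n`. -/
def V (n : ℕ) (p q : ℤ) : Submodule ℂ (Forms n) :=
  Submodule.span ℂ
    {x | ∃ s t : Finset (Fin n), (s.card : ℤ) = p ∧ (t.card : ℤ) = q ∧
      x = ((s.sort (· ≤ ·)).map (dz n)).prod * ((t.sort (· ≤ ·)).map (dzbar n)).prod}

/-- The conjugation operator on forms: the antilinear multiplicative involution
exchanging `dz i` and `dz̄ i`. -/
structure Conjugation (n : ℕ) where
  toFun : Forms n →ₛₗ[starRingEnd ℂ] Forms n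
  map_one' : toFun 1 = 1
  map_mul' : ∀ x y, toFun (x * y) = toFun x * toFun y
  map_dz' : ∀ i, toFun (dz n i) = dzbar n i
  map_dzbar' : ∀ i, toFun (dzbar n i) = dz n i

/-- A form is real if it is fixed by conjugation. -/
def IsRealForm (n : ℕ) (c : Conjugation n) (x : Forms n) : Prop := c.toFun x = x

/-- `η` is a Kähler form: `η = i w₁∧w̄₁ + ⋯ + i wₙ∧w̄ₙ` for some coordinate system
`(w₁,…,wₙ)`. -/
def IsKahler (n : ℕ) (c : Conjugation n) (η : Forms n) : Prop :=
  ∃ w : Fin n → Forms n,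
    (∀ i, w i ∈ V n 1 0) ∧ LinearIndependent ℂ w ∧
      η = ∑ i, Complex.I • (w i * c.toFun (w i))

/-- `α ↦ Θ ∧ α` is an isomorphism from `V^{p,q}` onto `V^{p',q'}`. -/
def IsWedgeIso (n : ℕ) (Θ : Forms n) (p q p' q' : ℤ) : Prop :=
  Set.BijOn (fun α => Θ * α) (V n p q : Set (Forms n)) (V n p' q' : Set (Forms n))

/-- Continuity of a family of forms over `[0,1]` (tested against linear functionals,
which is equivalent to continuity since `Forms n` is finite dimensional). -/
def IsContinuousFamily (n : ℕ) (fam : ℝ → Forms n) : Prop :=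
  ∀ φ : Forms n →ₗ[ℂ] ℂ, ContinuousOn (fun t => φ (fam t)) (Set.Icc (0:ℝ) 1)

/-- `Ω` is a Hodge-Riemann form for the bidegree `(p,q)` (with respect to the Kähler
form `ω`): `Ω` is a real `(n-p-q,n-p-q)`-form and there is a continuous deformation
`Ω_t` of real `(n-p-q,n-p-q)`-forms from `Ω` to `ω^{n-p-q}` such that for all
`0 ≤ r ≤ min p q` and `t ∈ [0,1]` the map `α ↦ Ω_t ∧ ω^{2r} ∧ α` is an isomorphism
from `V^{p-r,q-r}` onto `V^{n-q+r,n-p+r}`. -/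
def IsHodgeRiemannFor (n : ℕ) (c : Conjugation n) (ω : Forms n) (p q : ℤ)
    (Ω : Forms n) : Prop :=
  Ω ∈ V n ((n:ℤ) - p - q) ((n:ℤ) - p - q) ∧ IsRealForm n c Ω ∧
  ∃ fam : ℝ → Forms n,
    (∀ t ∈ Set.Icc (0:ℝ) 1,
        fam t ∈ V n ((n:ℤ) - p - q) ((n:ℤ) - p - q) ∧ IsRealForm n c (fam t)) ∧
    IsContinuousFamily n fam ∧ fam 0 = Ω ∧ fam 1 = ω ^ ((n:ℤ) - p - q).toNat ∧
    ∀ r : ℤ, 0 ≤ r → r ≤ min p q → ∀ t ∈ Set.Icc (0:ℝ) 1,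
      IsWedgeIso n (fam t * ω ^ (2 * r).toNat) (p - r) (q - r)
        ((n:ℤ) - q + r) ((n:ℤ) - p + r)

/-- `Ω` is a Hodge-Riemann (`k`,`k`)-form: it is a Hodge-Riemann form for every
bidegree `(p,q)` with `p + q = n - k`. -/
def IsHodgeRiemannForm (n : ℕ) (c : Conjugation n) (ω : Forms n) (k : ℤ)
    (Ω : Forms n) : Prop :=
  ∀ p q : ℤ, 0 ≤ p → 0 ≤ q → p + q = (n:ℤ) - k → IsHodgeRiemannFor n c ω p q Ω

/-- A `(k,k)`-form is positive if it is a combination with positive coefficients of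
forms `i^{k²} a ∧ ā` with `a ∈ V^{k,0}`. -/
def IsPositiveForm (n : ℕ) (c : Conjugation n) (k : ℤ) (Ω : Forms n) : Prop :=
  ∃ (m : ℕ) (a : Fin m → Forms n) (r : Fin m → ℝ),
    (∀ j, a j ∈ V n k 0) ∧ (∀ j, 0 < r j) ∧
      Ω = ∑ j, (r j : ℂ) • (Complex.I ^ (k * k) • (a j * c.toFun (a j)))

/-- A positive `(k,k)`-form is strictly positive if its restriction to every
`k`-dimensional subspace is nonzero, i.e. `Ω ∧ β ∧ β̄ ≠ 0` for every nonzero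
decomposable `β = w₁ ∧ … ∧ w_{n-k} ∈ V^{n-k,0}`. -/
def IsStrictlyPositiveForm (n : ℕ) (c : Conjugation n) (k : ℤ) (Ω : Forms n) : Prop :=
  IsPositiveForm n c k Ω ∧
  ∀ m : ℕ, (m : ℤ) = (n:ℤ) - k →
    ∀ w : Fin m → Forms n, (∀ i, w i ∈ V n 1 0) → LinearIndependent ℂ w →
      Ω * (List.ofFn w).prod * c.toFun ((List.ofFn w).prod) ≠ 0

/-- The sign `i^{q-p} (-1)^{(p+q)(p+q+1)/2}` in the definition of the Hermitian form `Q`. -/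
def Qsign (p q : ℤ) : ℂ :=
  Complex.I ^ (q - p) * (-1 : ℂ) ^ ((p + q) * (p + q + 1) / 2)

/-- The primitive subspace `P^{p,q} = {α ∈ V^{p,q} : α ∧ Ω ∧ ω = 0}`. -/
def Pprim (n : ℕ) (ω Ω : Forms n) (p q : ℤ) : Submodule ℂ (Forms n) :=
  V n p q ⊓ LinearMap.ker (LinearMap.mulRight ℂ (Ω * ω))


/-- The standard Kähler form `ω = i dz₁∧dz̄₁ + ⋯ + i dzₙ∧dz̄ₙ`. -/
def omega0 (n : ℕ) : Forms n := ∑ i : Fin n, Complex.I • (dz n i * dzbar n i)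


/-! ### Auxiliary lemmas -/

section Aux

variable {n : ℕ}

/-- The generating set of `V n p q`. -/
def genSet (n : ℕ) (p q : ℤ) : Set (Forms n) :=
  {x | ∃ s t : Finset (Fin n), (s.card : ℤ) = p ∧ (t.card : ℤ) = q ∧
    x = ((s.sort (· ≤ ·)).map (dz n)).prod * ((t.sort (· ≤ ·)).map (dzbar n)).prod}

lemma V_eq (n : ℕ) (p q : ℤ) : V n p q = Submodule.span ℂ (genSet n p q) := rfl

lemma gen_mem_V {s t : Finset (Fin n)} {p q : ℤ} (hs : (s.card : ℤ) = p)
    (ht : (t.card : ℤ) = q) :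
    ((s.sort (· ≤ ·)).map (dz n)).prod * ((t.sort (· ≤ ·)).map (dzbar n)).prod ∈ V n p q :=
  Submodule.subset_span ⟨s, t, hs, ht, rfl⟩

/-- A form is a "one-form" if it is `ι` of a vector. -/
def IsI (x : Forms n) : Prop := ∃ v : (Fin n ⊕ Fin n) → ℂ, x = ExteriorAlgebra.ι ℂ v

lemma isI_dz (i : Fin n) : IsI (dz n i) := ⟨_, rfl⟩

lemma isI_dzbar (i : Fin n) : IsI (dzbar n i) := ⟨_, rfl⟩

lemma IsI.mul_self {x : Forms n} (h : IsI x) : x * x = 0 := by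
  obtain ⟨v, rfl⟩ := h; exact ExteriorAlgebra.ι_sq_zero v

lemma IsI.anticomm {x y : Forms n} (hx : IsI x) (hy : IsI y) : x * y = -(y * x) := by
  obtain ⟨v, rfl⟩ := hx; obtain ⟨w, rfl⟩ := hy
  rw [eq_neg_iff_add_eq_zero]
  exact ExteriorAlgebra.ι_add_mul_swap v w

lemma IsI.mul_list_prod {L : List (Forms n)} (hL : ∀ a ∈ L, IsI a) {x : Forms n}
    (hx : IsI x) : x * L.prod = ((-1 : ℂ) ^ L.length) • (L.prod * x) := by
  induction L with
  | nil => simp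
  | cons a t ih =>
    have ha : IsI a := hL a (by simp)
    have ht : ∀ b ∈ t, IsI b := fun b hb => hL b (by simp [hb])
    rw [List.prod_cons, List.length_cons, ← mul_assoc, hx.anticomm ha, neg_mul,
      mul_assoc, ih ht, mul_smul_comm, ← mul_assoc, pow_succ, mul_smul, neg_one_smul,
      smul_neg]

lemma prod_even_central {L : List (Forms n)} (hL : ∀ a ∈ L, IsI a) (he : Even L.length)
    (y : Forms n) : L.prod * y = y * L.prod := by
  induction y using ExteriorAlgebra.induction with
  | algebraMap r => exact (Algebra.commutes r _).symm
  | ι v =>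
    have h := IsI.mul_list_prod hL (⟨v, rfl⟩ : IsI (ExteriorAlgebra.ι ℂ v))
    rw [he.neg_one_pow, one_smul] at h
    exact h.symm
  | mul a b ha hb => rw [← mul_assoc, ha, mul_assoc, hb, ← mul_assoc]
  | add a b ha hb => rw [mul_add, add_mul, ha, hb]

lemma gen10 {x : Forms n} (hx : x ∈ genSet n 1 0) : ∃ i, x = dz n i := by
  obtain ⟨s, t, hs, ht, rfl⟩ := hx
  obtain ⟨i, rfl⟩ := Finset.card_eq_one.mp (by exact_mod_cast hs)
  have ht' : t = ∅ := Finset.card_eq_zero.mp (by exact_mod_cast ht)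
  subst ht'
  exact ⟨i, by simp⟩

lemma gen01 {x : Forms n} (hx : x ∈ genSet n 0 1) : ∃ i, x = dzbar n i := by
  obtain ⟨s, t, hs, ht, rfl⟩ := hx
  obtain ⟨i, rfl⟩ := Finset.card_eq_one.mp (by exact_mod_cast ht)
  have hs' : s = ∅ := Finset.card_eq_zero.mp (by exact_mod_cast hs)
  subst hs'
  exact ⟨i, by simp⟩

lemma dz_mem_V10 (i : Fin n) : dz n i ∈ V n 1 0 := by
  have := gen_mem_V (s := ({i} : Finset (Fin n))) (t := (∅ : Finset (Fin n)))
    (p := 1) (q := 0) (by simp) (by simp)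
  simpa using this

lemma dzbar_mem_V01 (i : Fin n) : dzbar n i ∈ V n 0 1 := by
  have := gen_mem_V (s := (∅ : Finset (Fin n))) (t := ({i} : Finset (Fin n)))
    (p := 0) (q := 1) (by simp) (by simp)
  simpa using this

lemma mem_V10_isI {x : Forms n} (hx : x ∈ V n 1 0) : IsI x := by
  have hrange : V n 1 0 ≤ LinearMap.range (ExteriorAlgebra.ι ℂ
      (M := (Fin n ⊕ Fin n) → ℂ)) := by
    rw [V_eq]
    refine Submodule.span_le.mpr ?_
    intro x hx
    obtain ⟨i, rfl⟩ := gen10 hx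
    exact ⟨_, rfl⟩
  obtain ⟨v, hv⟩ := hrange hx
  exact ⟨v, hv.symm⟩

lemma mem_V01_isI {x : Forms n} (hx : x ∈ V n 0 1) : IsI x := by
  have hrange : V n 0 1 ≤ LinearMap.range (ExteriorAlgebra.ι ℂ
      (M := (Fin n ⊕ Fin n) → ℂ)) := by
    rw [V_eq]
    refine Submodule.span_le.mpr ?_
    intro x hx
    obtain ⟨i, rfl⟩ := gen01 hx
    exact ⟨_, rfl⟩
  obtain ⟨v, hv⟩ := hrange hx
  exact ⟨v, hv.symm⟩

/-- Multiplying a sorted product by one more generator gives (up to sign) a sorted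
product, or zero. -/
lemma isI_insert_sorted (g : Fin n → Forms n) (hg : ∀ i, IsI (g i)) (l : List (Fin n)) :
    l.Pairwise (· < ·) → ∀ i : Fin n,
      g i * (l.map g).prod = 0 ∨
      ∃ (ε : ℂ) (l' : List (Fin n)), (ε = 1 ∨ ε = -1) ∧ l'.Pairwise (· < ·) ∧
        l'.length = l.length + 1 ∧ (∀ x ∈ l', x = i ∨ x ∈ l) ∧
        g i * (l.map g).prod = ε • (l'.map g).prod := by
  induction l with
  | nil =>
    intro _ i
    right
    exact ⟨1, [i], Or.inl rfl, List.pairwise_singleton _ i, rfl, by simp, by simp⟩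
  | cons a t ih =>
    intro hsort i
    have hta : ∀ x ∈ t, a < x := (List.pairwise_cons.mp hsort).1
    have htsort : t.Pairwise (· < ·) := (List.pairwise_cons.mp hsort).2
    rcases lt_trichotomy i a with hia | hia | hia
    · right
      refine ⟨1, i :: a :: t, Or.inl rfl, ?_, rfl, ?_, by simp⟩
      · exact List.pairwise_cons.mpr ⟨by
          intro x hx
          rcases List.mem_cons.mp hx with rfl | hx'
          · exact hia
          · exact hia.trans (hta x hx'), hsort⟩
      · intro x hx
        rcases List.mem_cons.mp hx with rfl | hx'
        · exact Or.inl rfl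
        · exact Or.inr hx'
    · left
      subst hia
      rw [List.map_cons, List.prod_cons, ← mul_assoc, (hg i).mul_self, zero_mul]
    · rcases ih htsort i with h0 | ⟨ε, l', hε, hsort', hlen', hsub', heq'⟩
      · left
        rw [List.map_cons, List.prod_cons, ← mul_assoc, (hg i).anticomm (hg a), neg_mul,
          mul_assoc, h0, mul_zero, neg_zero]
      · right
        refine ⟨-ε, a :: l', by rcases hε with h | h <;> simp [h], ?_, by simp [hlen'], ?_, ?_⟩
        · refine List.pairwise_cons.mpr ⟨?_, hsort'⟩
          intro x hx
          rcases hsub' x hx with rfl | hxt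
          · exact hia
          · exact hta x hxt
        · intro x hx
          rcases List.mem_cons.mp hx with rfl | hx'
          · exact Or.inr (by simp)
          · rcases hsub' x hx' with rfl | h
            · exact Or.inl rfl
            · exact Or.inr (by simp [h])
        · rw [List.map_cons, List.prod_cons, ← mul_assoc, (hg i).anticomm (hg a), neg_mul,
            mul_assoc, heq', mul_smul_comm, List.map_cons, List.prod_cons, neg_smul]

lemma sorted_prod_mem_V {l₁ l₂ : List (Fin n)} (h₁ : l₁.Pairwise (· < ·))
    (h₂ : l₂.Pairwise (· < ·)) {a b : ℤ} (ha : (l₁.length : ℤ) = a) (hb : (l₂.length : ℤ) = b) :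
    (l₁.map (dz n)).prod * (l₂.map (dzbar n)).prod ∈ V n a b := by
  have hnd₁ : l₁.Nodup := h₁.nodup
  have hnd₂ : l₂.Nodup := h₂.nodup
  have e₁ : l₁.toFinset.sort (· ≤ ·) = l₁ :=
    (List.toFinset_sort (· ≤ ·) hnd₁).mpr (h₁.imp le_of_lt)
  have e₂ : l₂.toFinset.sort (· ≤ ·) = l₂ :=
    (List.toFinset_sort (· ≤ ·) hnd₂).mpr (h₂.imp le_of_lt)
  have := gen_mem_V (s := l₁.toFinset) (t := l₂.toFinset) (p := a) (q := b)
    (by rw [List.toFinset_card_of_nodup hnd₁]; exact ha)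
    (by rw [List.toFinset_card_of_nodup hnd₂]; exact hb)
  rwa [e₁, e₂] at this

lemma dz_mul_dzbar_mul_mem {a b : ℤ} {y : Forms n} (i j : Fin n) (hy : y ∈ V n a b) :
    dz n i * (dzbar n j * y) ∈ V n (a + 1) (b + 1) := by
  rw [V_eq] at hy
  induction hy using Submodule.span_induction with
  | mem x hx =>
    obtain ⟨s, t, hs, ht, rfl⟩ := hx
    set ls := s.sort (· ≤ ·) with hls_def
    set lt := t.sort (· ≤ ·) with hlt_def
    have hlsI : ∀ z ∈ ls.map (dz n), IsI z := by
      intro z hz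
      obtain ⟨k, -, rfl⟩ := List.mem_map.mp hz
      exact isI_dz k
    have key : dz n i * (dzbar n j * ((ls.map (dz n)).prod * (lt.map (dzbar n)).prod))
        = ((-1 : ℂ) ^ (ls.map (dz n)).length) •
            ((dz n i * (ls.map (dz n)).prod) * (dzbar n j * (lt.map (dzbar n)).prod)) := by
      rw [← mul_assoc (dzbar n j), IsI.mul_list_prod hlsI (isI_dzbar j), smul_mul_assoc,
        mul_smul_comm, mul_assoc, mul_assoc, ← mul_assoc (dz n i)]
    rw [key]
    have hsort₁ : ls.Pairwise (· < ·) := (Finset.sortedLT_sort s).pairwise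
    have hsort₂ : lt.Pairwise (· < ·) := (Finset.sortedLT_sort t).pairwise
    rcases isI_insert_sorted (dz n) isI_dz ls hsort₁ i with hz1 | ⟨ε₁, l₁, hε₁, hs₁, hl₁, -, he₁⟩
    · rw [hz1, zero_mul, smul_zero]; exact zero_mem _
    rcases isI_insert_sorted (dzbar n) isI_dzbar lt hsort₂ j with hz2 | ⟨ε₂, l₂, hε₂, hs₂, hl₂, -, he₂⟩
    · rw [hz2, mul_zero, smul_zero]; exact zero_mem _
    rw [he₁, he₂, smul_mul_assoc, mul_smul_comm]
    refine Submodule.smul_mem _ _ (Submodule.smul_mem _ _ (Submodule.smul_mem _ _ ?_))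
    refine sorted_prod_mem_V hs₁ hs₂ ?_ ?_
    · rw [hl₁]; push_cast [hls_def, Finset.length_sort]; omega
    · rw [hl₂]; push_cast [hlt_def, Finset.length_sort]; omega
  | zero => rw [mul_zero, mul_zero]; exact zero_mem _
  | add x y _ _ hx hy => rw [mul_add, mul_add]; exact add_mem hx hy
  | smul r x _ hx => rw [mul_smul_comm, mul_smul_comm]; exact Submodule.smul_mem _ _ hx

lemma mul_V10_V01_mem {a b : ℤ} {u v y : Forms n} (hu : u ∈ V n 1 0) (hv : v ∈ V n 0 1)
    (hy : y ∈ V n a b) : u * (v * y) ∈ V n (a + 1) (b + 1) := by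
  rw [V_eq] at hu hv
  induction hu using Submodule.span_induction with
  | mem x hx =>
    obtain ⟨i, rfl⟩ := gen10 hx
    induction hv using Submodule.span_induction with
    | mem z hz =>
      obtain ⟨j, rfl⟩ := gen01 hz
      exact dz_mul_dzbar_mul_mem i j hy
    | zero => rw [zero_mul, mul_zero]; exact zero_mem _
    | add z w _ _ hz hw => rw [add_mul, mul_add]; exact add_mem hz hw
    | smul r z _ hz => rw [smul_mul_assoc, mul_smul_comm]; exact Submodule.smul_mem _ _ hz
  | zero => rw [zero_mul]; exact zero_mem _
  | add x z _ _ hx hz => rw [add_mul]; exact add_mem hx hz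
  | smul r x _ hx => rw [smul_mul_assoc]; exact Submodule.smul_mem _ _ hx

lemma conj_mem_V01 (c : Conjugation n) {x : Forms n} (hx : x ∈ V n 1 0) :
    c.toFun x ∈ V n 0 1 := by
  rw [V_eq] at hx
  induction hx using Submodule.span_induction with
  | mem z hz =>
    obtain ⟨i, rfl⟩ := gen10 hz
    rw [c.map_dz']
    exact dzbar_mem_V01 i
  | zero => rw [map_zero]; exact zero_mem _
  | add z w _ _ hz hw => rw [map_add]; exact add_mem hz hw
  | smul r z _ hz =>
    rw [LinearMap.map_smulₛₗ]
    exact Submodule.smul_mem _ _ hz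

lemma kahler_mul_mem {c : Conjugation n} {ω : Forms n} (hω : IsKahler n c ω) {a b : ℤ}
    {y : Forms n} (hy : y ∈ V n a b) : ω * y ∈ V n (a + 1) (b + 1) := by
  obtain ⟨w, hw, -, rfl⟩ := hω
  rw [Finset.sum_mul]
  refine Submodule.sum_mem _ fun k _ => ?_
  rw [smul_mul_assoc, mul_assoc]
  exact Submodule.smul_mem _ _ (mul_V10_V01_mem (hw k) (conj_mem_V01 c (hw k)) hy)

lemma kahler_central {c : Conjugation n} {ω : Forms n} (hω : IsKahler n c ω)
    (y : Forms n) : ω * y = y * ω := by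
  obtain ⟨w, hw, -, rfl⟩ := hω
  rw [Finset.sum_mul, Finset.mul_sum]
  refine Finset.sum_congr rfl fun k _ => ?_
  rw [smul_mul_assoc, mul_smul_comm]
  congr 1
  have h := prod_even_central (L := [w k, c.toFun (w k)]) ?_ (by simp) y
  · simpa [mul_assoc] using h
  · intro z hz
    rcases List.mem_cons.mp hz with rfl | hz'
    · exact mem_V10_isI (hw k)
    · rcases List.mem_cons.mp hz' with rfl | hz''
      · exact mem_V01_isI (conj_mem_V01 c (hw k))
      · simp at hz''

lemma V_diag_central {m : ℤ} {Ω : Forms n} (hΩ : Ω ∈ V n m m) (y : Forms n) :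
    Ω * y = y * Ω := by
  rw [V_eq] at hΩ
  induction hΩ using Submodule.span_induction with
  | mem x hx =>
    obtain ⟨s, t, hs, ht, rfl⟩ := hx
    rw [← List.prod_append]
    refine prod_even_central ?_ ?_ y
    · intro z hz
      rcases List.mem_append.mp hz with hz' | hz'
      · obtain ⟨k, -, rfl⟩ := List.mem_map.mp hz'
        exact isI_dz k
      · obtain ⟨k, -, rfl⟩ := List.mem_map.mp hz'
        exact isI_dzbar k
    · have hst : s.card = t.card := by omega
      simp only [List.length_append, List.length_map, Finset.length_sort, hst]
      exact Even.add_self t.card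
  | zero => rw [zero_mul, mul_zero]
  | add x z _ _ hx hz => rw [add_mul, mul_add, hx, hz]
  | smul r x _ hx => rw [smul_mul_assoc, mul_smul_comm, hx]

lemma iota_expand (v : (Fin n ⊕ Fin n) → ℂ) :
    ExteriorAlgebra.ι ℂ v
      = ∑ i : Fin n, v (Sum.inl i) • dz n i + ∑ i : Fin n, v (Sum.inr i) • dzbar n i := by
  conv_lhs => rw [← Finset.univ_sum_single v]
  rw [map_sum, Fintype.sum_sum_type]
  congr 1 <;> refine Finset.sum_congr rfl fun k _ => ?_
  · have h : (Pi.single (Sum.inl k) (v (Sum.inl k)) : (Fin n ⊕ Fin n) → ℂ)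
        = v (Sum.inl k) • (Pi.single (Sum.inl k) (1 : ℂ) : (Fin n ⊕ Fin n) → ℂ) := by
      rw [← Pi.single_smul, smul_eq_mul, mul_one]
    rw [h, map_smul]; rfl
  · have h : (Pi.single (Sum.inr k) (v (Sum.inr k)) : (Fin n ⊕ Fin n) → ℂ)
        = v (Sum.inr k) • (Pi.single (Sum.inr k) (1 : ℂ) : (Fin n ⊕ Fin n) → ℂ) := by
      rw [← Pi.single_smul, smul_eq_mul, mul_one]
    rw [h, map_smul]; rfl

lemma conj_conj (c : Conjugation n) (x : Forms n) : c.toFun (c.toFun x) = x := by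
  induction x using ExteriorAlgebra.induction with
  | algebraMap r =>
    rw [Algebra.algebraMap_eq_smul_one, LinearMap.map_smulₛₗ, LinearMap.map_smulₛₗ,
      c.map_one', c.map_one', Complex.conj_conj]
  | ι v =>
    rw [iota_expand]
    simp only [map_add, map_sum, LinearMap.map_smulₛₗ, c.map_dz', c.map_dzbar',
      Complex.conj_conj]
  | mul a b ha hb => rw [c.map_mul', c.map_mul', ha, hb]
  | add a b ha hb => rw [map_add, map_add, ha, hb]

lemma conj_kahler {c : Conjugation n} {ω : Forms n} (hω : IsKahler n c ω) :
    c.toFun ω = ω := by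
  obtain ⟨w, hw, -, rfl⟩ := hω
  rw [map_sum]
  refine Finset.sum_congr rfl fun k _ => ?_
  rw [LinearMap.map_smulₛₗ, c.map_mul', conj_conj]
  have h1 := mem_V10_isI (hw k)
  have h2 := mem_V01_isI (conj_mem_V01 c (hw k))
  rw [h2.anticomm h1]
  simp [Complex.conj_I]

end Aux

set_option maxHeartbeats 1000000 in
/-- **Proposition 2.6 (decomposition part).** Under the property `(*)` for `r = 0, 1`,
the space `V^{p,q}` splits into the `Q`-orthogonal direct sum
`V^{p,q} = P^{p,q} ⊕ ω ∧ V^{p-1,q-1}`; `Q`-orthogonality of `α` and `β` is expressed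
by the vanishing of the top form `α ∧ β̄ ∧ Ω` (equivalently `Q(α,β) = 0`, the Hodge
star operator being injective). -/
theorem lefschetz_decomposition_linear
    (n : ℕ) (c : Conjugation n) (ω : Forms n) (hω : IsKahler n c ω)
    (p q : ℕ) (hpq : p + q ≤ n)
    (Ω : Forms n) (hΩmem : Ω ∈ V n ((n:ℤ) - p - q) ((n:ℤ) - p - q))
    (hΩreal : IsRealForm n c Ω)
    (fam : ℝ → Forms n)
    (hmem : ∀ t ∈ Set.Icc (0:ℝ) 1, fam t ∈ V n ((n:ℤ) - p - q) ((n:ℤ) - p - q))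
    (hreal : ∀ t ∈ Set.Icc (0:ℝ) 1, IsRealForm n c (fam t))
    (hcont : IsContinuousFamily n fam)
    (h0 : fam 0 = Ω) (h1 : fam 1 = ω ^ (n - p - q))
    (hiso : ∀ r : ℤ, r = 0 ∨ r = 1 → ∀ t ∈ Set.Icc (0:ℝ) 1,
      IsWedgeIso n (fam t * ω ^ (2 * r).toNat) ((p:ℤ) - r) ((q:ℤ) - r)
        ((n:ℤ) - q + r) ((n:ℤ) - p + r))
 :
    (Pprim n ω Ω p q ⊔
        (V n ((p:ℤ) - 1) ((q:ℤ) - 1)).map (LinearMap.mulLeft ℂ ω) = V n p q) ∧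
    (Pprim n ω Ω p q ⊓
        (V n ((p:ℤ) - 1) ((q:ℤ) - 1)).map (LinearMap.mulLeft ℂ ω) = ⊥) ∧
    (∀ α ∈ Pprim n ω Ω p q,
      ∀ β ∈ (V n ((p:ℤ) - 1) ((q:ℤ) - 1)).map (LinearMap.mulLeft ℂ ω),
        α * c.toFun β * Ω = 0) := by
  clear hpq hΩreal hmem hreal hcont h1
  have hωc : ∀ y : Forms n, ω * y = y * ω := kahler_central hω
  have hΩc : ∀ y : Forms n, Ω * y = y * Ω := V_diag_central hΩmem
  have hΩω : ∀ y : Forms n, (Ω * ω) * y = y * (Ω * ω) := by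
    intro y
    rw [mul_assoc, hωc y, ← mul_assoc, hΩc y, mul_assoc]
  have h01 : (0 : ℝ) ∈ Set.Icc (0 : ℝ) 1 := ⟨le_refl 0, zero_le_one⟩
  have hiso0 : Set.BijOn (fun α => Ω * α) (V n p q) (V n ((n : ℤ) - q) ((n : ℤ) - p)) := by
    have h := hiso 0 (Or.inl rfl) 0 h01
    rw [IsWedgeIso] at h
    simpa [h0] using h
  have hiso1 : Set.BijOn (fun α => Ω * ω ^ 2 * α) (V n ((p : ℤ) - 1) ((q : ℤ) - 1))
      (V n ((n : ℤ) - q + 1) ((n : ℤ) - p + 1)) := by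
    have h := hiso 1 (Or.inr rfl) 0 h01
    rw [IsWedgeIso] at h
    have e : ((2 * 1 : ℤ)).toNat = 2 := rfl
    rw [h0, e] at h
    exact h
  have rearr : ∀ β : Forms n, (ω * β) * (Ω * ω) = Ω * ω ^ 2 * β := by
    intro β
    calc (ω * β) * (Ω * ω) = ω * (β * (Ω * ω)) := mul_assoc _ _ _
      _ = ω * ((Ω * ω) * β) := by rw [hΩω β]
      _ = (ω * (Ω * ω)) * β := (mul_assoc _ _ _).symm
      _ = ((ω * Ω) * ω) * β := by rw [mul_assoc ω Ω ω]
      _ = ((Ω * ω) * ω) * β := by rw [hωc Ω]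
      _ = (Ω * (ω * ω)) * β := by rw [mul_assoc Ω ω ω]
      _ = Ω * ω ^ 2 * β := by rw [pow_two]
  have hmapV : ∀ β ∈ V n ((p : ℤ) - 1) ((q : ℤ) - 1), ω * β ∈ V n p q := by
    intro β hβ
    have h := kahler_mul_mem hω hβ
    have e1 : (p : ℤ) - 1 + 1 = p := by ring
    have e2 : (q : ℤ) - 1 + 1 = q := by ring
    rwa [e1, e2] at h
  have hle1 : Pprim n ω Ω p q ≤ V n (p : ℤ) (q : ℤ) := inf_le_left
  have hle2 : (V n ((p : ℤ) - 1) ((q : ℤ) - 1)).map (LinearMap.mulLeft ℂ ω)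
      ≤ V n (p : ℤ) (q : ℤ) := by
    rintro x hx
    obtain ⟨β, hβ, rfl⟩ := Submodule.mem_map.mp hx
    simpa using hmapV β hβ
  refine ⟨?_, ?_, ?_⟩
  · -- sup
    refine le_antisymm (sup_le hle1 hle2) ?_
    intro α hα
    have h1 : Ω * α ∈ V n ((n : ℤ) - q) ((n : ℤ) - p) := hiso0.mapsTo hα
    have h2 : ω * (Ω * α) ∈ V n ((n : ℤ) - q + 1) ((n : ℤ) - p + 1) :=
      kahler_mul_mem hω h1
    obtain ⟨β, hβ, hβeq⟩ := hiso1.surjOn h2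
    simp only at hβeq
    have hγmem : ω * β ∈ (V n ((p : ℤ) - 1) ((q : ℤ) - 1)).map (LinearMap.mulLeft ℂ ω) :=
      Submodule.mem_map.mpr ⟨β, hβ, rfl⟩
    have hαω : α * (Ω * ω) = ω * (Ω * α) := by
      calc α * (Ω * ω) = (Ω * ω) * α := by rw [← hΩω α]
        _ = (ω * Ω) * α := by rw [hωc Ω]
        _ = ω * (Ω * α) := mul_assoc _ _ _
    have hprim : α - ω * β ∈ Pprim n ω Ω p q := by
      refine Submodule.mem_inf.mpr ⟨sub_mem hα (hmapV β hβ), ?_⟩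
      rw [LinearMap.mem_ker, LinearMap.mulRight_apply, sub_mul, hαω, rearr, hβeq, sub_self]
    have : α = (α - ω * β) + ω * β := by abel
    rw [this]
    exact Submodule.add_mem_sup hprim hγmem
  · -- inf
    rw [eq_bot_iff]
    intro x hx
    obtain ⟨hxP, hxm⟩ := Submodule.mem_inf.mp hx
    obtain ⟨β, hβ, rfl⟩ := Submodule.mem_map.mp hxm
    have hker : (LinearMap.mulLeft ℂ ω β) * (Ω * ω) = 0 := by
      have := (Submodule.mem_inf.mp hxP).2
      rw [LinearMap.mem_ker, LinearMap.mulRight_apply] at this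
      exact this
    rw [LinearMap.mulLeft_apply] at hker ⊢
    rw [rearr] at hker
    have h0' : Ω * ω ^ 2 * (0 : Forms n) = 0 := mul_zero _
    have hβ0 : β = 0 := hiso1.injOn hβ (zero_mem _) (by simpa using hker.trans h0'.symm)
    rw [hβ0, mul_zero]
    exact Submodule.zero_mem ⊥
  · -- orthogonality
    intro α hα β hβ
    obtain ⟨γ, hγ, rfl⟩ := Submodule.mem_map.mp hβ
    have hαker : α * (Ω * ω) = 0 := by
      have := (Submodule.mem_inf.mp hα).2
      rwa [LinearMap.mem_ker, LinearMap.mulRight_apply] at this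
    rw [LinearMap.mulLeft_apply, c.map_mul', conj_kahler hω]
    calc α * (ω * c.toFun γ) * Ω
        = α * ω * (c.toFun γ * Ω) := by rw [← mul_assoc, mul_assoc (α * ω)]
      _ = α * ω * (Ω * c.toFun γ) := by rw [hΩc (c.toFun γ)]
      _ = α * (ω * Ω) * c.toFun γ := by rw [← mul_assoc, mul_assoc α ω Ω]
      _ = α * (Ω * ω) * c.toFun γ := by rw [hωc Ω]
      _ = 0 := by rw [hαker, zero_mul]

end DNHodge
end
end

section
/- Let E be a complex vector space of dimension n with coordinate system (z_1,…,z_n) and Kähler form ω = i dz_1∧dz̄_1 + ⋯ + i dz_n∧dz̄_n, and let p,q be integers with q ≥ 2 and p+q ≤ n. Consider the form α := dz̄_2∧…∧dz̄_q ∧ dz_{q+1}∧…∧dz_{p+q} ∈ V^{p,q−1}. Then α is primitive, i.e. α ∧ ω^{n−p−q+2} = 0, and α ∧ dz̄_1 does not belong to ω ∧ V^{p−1,q−1}. -/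
noncomputable section

namespace DNHodge



open scoped BigOperators

/-- The form `α := dz̄₂ ∧ … ∧ dz̄_q ∧ dz_{q+1} ∧ … ∧ dz_{p+q} ∈ V^{p,q-1}` from the
proof of Lemma 2.3 (indices written here starting from `0`). -/
def alpha18 (n p q : ℕ) (hq : 2 ≤ q) (hpq : p + q ≤ n) : Forms n :=
  (List.ofFn fun j : Fin (q - 1) =>
      dzbar n ⟨j.1 + 1, by have := j.2; omega⟩).prod *
  (List.ofFn fun j : Fin p =>
      dz n ⟨q + j.1, by have := j.2; omega⟩).prod

open ExteriorAlgebra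
variable {R M : Type*} [CommRing R] [AddCommGroup M] [Module R M]

lemma prod_mul_ι (l : List M) (v : M) :
    (l.map (ι R)).prod * ι R v = (-1 : R) ^ l.length • (ι R v * (l.map (ι R)).prod) := by
  induction l with
  | nil => simp
  | cons a t ih =>
    rw [List.map_cons, List.prod_cons, List.length_cons, mul_assoc, ih,
      mul_smul_comm, pow_succ]
    have h : ι R a * ι R v = -(ι R v * ι R a) :=
      eq_neg_of_add_eq_zero_left (ι_add_mul_swap a v)
    rw [← mul_assoc, h]
    rw [mul_comm ((-1:R)^t.length) (-1), mul_smul, neg_one_smul]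
    simp [mul_assoc]

lemma prod_mul_ι_of_mem (l : List M) (v : M) (hv : v ∈ l) :
    (l.map (ι R)).prod * ι R v = 0 := by
  induction l with
  | nil => simp at hv
  | cons a t ih =>
    rw [List.map_cons, List.prod_cons, mul_assoc]
    rcases List.mem_cons.mp hv with rfl | hv
    · rw [prod_mul_ι, mul_smul_comm, ← mul_assoc, ι_sq_zero, zero_mul, smul_zero]
    · rw [ih hv, mul_zero]

lemma prod_mul_prod_swap (l₁ l₂ : List M) :
    (l₁.map (ι R)).prod * (l₂.map (ι R)).prod =
      (-1 : R) ^ (l₁.length * l₂.length) • ((l₂.map (ι R)).prod * (l₁.map (ι R)).prod) := by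
  induction l₂ with
  | nil => simp
  | cons a t ih =>
    rw [List.map_cons, List.prod_cons, ← mul_assoc, prod_mul_ι, smul_mul_assoc,
      mul_assoc, ih, mul_smul_comm, smul_smul, ← pow_add, List.length_cons]
    rw [← mul_assoc ((ι R) a)]
    ring_nf

lemma pair_mul_comm (x y : M) (z : ExteriorAlgebra R M) :
    (ι R x * ι R y) * z = z * (ι R x * ι R y) := by
  induction z using ExteriorAlgebra.induction with
  | algebraMap r => rw [← Algebra.commutes]
  | ι m =>
    have hxm : ι R x * ι R m = -(ι R m * ι R x) :=
      eq_neg_of_add_eq_zero_left (ι_add_mul_swap x m)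
    have hym : ι R y * ι R m = -(ι R m * ι R y) :=
      eq_neg_of_add_eq_zero_left (ι_add_mul_swap y m)
    rw [mul_assoc, hym, mul_neg, ← mul_assoc, hxm, neg_mul, neg_neg, mul_assoc]
  | mul a b ha hb => rw [← mul_assoc, ha, mul_assoc, hb, ← mul_assoc]
  | add a b ha hb => rw [mul_add, ha, hb, add_mul]

lemma pair_sq_zero (x y : M) : (ι R x * ι R y) * (ι R x * ι R y) = 0 := by
  have hyx : ι R y * ι R x = -(ι R x * ι R y) :=
    eq_neg_of_add_eq_zero_left (ι_add_mul_swap y x)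
  calc (ι R x * ι R y) * (ι R x * ι R y)
      = ι R x * (ι R y * ι R x) * ι R y := by
        simp only [mul_assoc]
    _ = 0 := by rw [hyx, mul_neg, ← mul_assoc, ι_sq_zero]; simp

lemma sum_sq_zero_pow {A : Type*} [Ring A] {ι' : Type*} [DecidableEq ι'] (s : Finset ι')
    (c : ι' → A) (hcomm : ∀ i j, Commute (c i) (c j)) (hsq : ∀ i, c i * c i = 0) :
    ∀ m, s.card < m → (∑ i ∈ s, c i) ^ m = 0 := by
  induction s using Finset.induction_on with
  | empty => intro m hm; rw [Finset.sum_empty, zero_pow]; omega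
  | @insert a s ha ih =>
    intro m hm
    rw [Finset.card_insert_of_notMem ha] at hm
    rw [Finset.sum_insert ha]
    have hc : Commute (c a) (∑ i ∈ s, c i) := Commute.sum_right _ _ _ (fun i _ => hcomm a i)
    rw [hc.add_pow]
    apply Finset.sum_eq_zero
    intro k hk
    rcases Nat.lt_or_ge k 2 with hk2 | hk2
    · interval_cases k
      · rw [show m - 0 = m by omega, ih m (by omega)]; simp
      · rw [ih (m-1) (by omega)]; simp
    · have : c a ^ k = 0 := by
        have : c a ^ 2 = 0 := by rw [pow_two, hsq]
        calc c a ^ k = c a ^ 2 * c a ^ (k-2) := by rw [← pow_add]; congr 1; omega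
        _ = 0 := by rw [this, zero_mul]
      rw [this]; simp

open ExteriorAlgebra

def eVec (n : ℕ) (u : Fin n ⊕ Fin n) : (Fin n ⊕ Fin n) → ℂ := Pi.single u 1

lemma dz_eq (n : ℕ) (i : Fin n) : dz n i = ι ℂ (eVec n (Sum.inl i)) := rfl
lemma dzbar_eq (n : ℕ) (i : Fin n) : dzbar n i = ι ℂ (eVec n (Sum.inr i)) := rfl

def aList (n p q : ℕ) (hq : 2 ≤ q) (hpq : p + q ≤ n) : List (Fin n ⊕ Fin n) :=
  (List.ofFn fun j : Fin (q-1) => Sum.inr (⟨j.1+1, by have := j.2; omega⟩ : Fin n)) ++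
  (List.ofFn fun j : Fin p => Sum.inl (⟨q+j.1, by have := j.2; omega⟩ : Fin n))

lemma alpha_eq (n p q : ℕ) (hq : 2 ≤ q) (hpq : p + q ≤ n) :
    alpha18 n p q hq hpq =
      (((aList n p q hq hpq).map (eVec n)).map (ι ℂ)).prod := by
  unfold alpha18 aList
  rw [List.map_map, List.map_append, List.prod_append, List.map_ofFn, List.map_ofFn]
  rfl

set_option maxHeartbeats 1000000 in
theorem part2 (n p q : ℕ) (hq : 2 ≤ q) (hpq : p + q ≤ n) :
    alpha18 n p q hq hpq * omega0 n ^ (n - p - q + 2) = 0 := by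
  classical
  set α := alpha18 n p q hq hpq with hα
  set c : Fin n → Forms n := fun i => Complex.I • (dz n i * dzbar n i) with hc
  have homega : omega0 n = ∑ i, c i := rfl
  have hcomm : ∀ (i : Fin n) (z : Forms n), Commute (c i) z := by
    intro i z
    show c i * z = z * c i
    rw [hc]
    simp only [smul_mul_assoc, mul_smul_comm, dz_eq, dzbar_eq]
    rw [pair_mul_comm]
  have hsq : ∀ i, c i * c i = 0 := by
    intro i
    rw [hc]
    simp only [smul_mul_assoc, mul_smul_comm, dz_eq, dzbar_eq]
    rw [pair_sq_zero]
    simp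
  have hann : ∀ i : Fin n, ¬(i.1 = 0 ∨ p + q ≤ i.1) → α * c i = 0 := by
    intro i hi
    push_neg at hi
    obtain ⟨h1, h2⟩ := hi
    rw [hα, alpha_eq, hc]
    simp only [mul_smul_comm, dz_eq, dzbar_eq]
    set L := (aList n p q hq hpq).map (eVec n) with hL
    rcases Nat.lt_or_ge i.1 q with hiq | hiq
    · have hmem : eVec n (Sum.inr i) ∈ L := by
        rw [hL]
        apply List.mem_map_of_mem
        unfold aList
        rw [List.mem_append]
        left
        rw [List.mem_ofFn]
        refine ⟨⟨i.1 - 1, by omega⟩, ?_⟩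
        dsimp only
        congr 1
        apply Fin.ext
        simp
        omega
      have hswap : ι ℂ (eVec n (Sum.inl i)) * ι ℂ (eVec n (Sum.inr i)) =
          -(ι ℂ (eVec n (Sum.inr i)) * ι ℂ (eVec n (Sum.inl i))) :=
        eq_neg_of_add_eq_zero_left (ι_add_mul_swap _ _)
      rw [hswap, mul_neg, ← mul_assoc, prod_mul_ι_of_mem L _ hmem, zero_mul, neg_zero,
        smul_zero]
    · have hmem : eVec n (Sum.inl i) ∈ L := by
        rw [hL]
        apply List.mem_map_of_mem
        unfold aList
        rw [List.mem_append]
        right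
        rw [List.mem_ofFn]
        refine ⟨⟨i.1 - q, by omega⟩, ?_⟩
        dsimp only
        congr 1
        apply Fin.ext
        simp
        omega
      rw [← mul_assoc, prod_mul_ι_of_mem L _ hmem, zero_mul, smul_zero]
  set A : Finset (Fin n) := Finset.univ.filter (fun i => i.1 = 0 ∨ p + q ≤ i.1) with hA
  have hstep : ∀ k : ℕ, α * omega0 n ^ k = α * (∑ i ∈ A, c i) ^ k := by
    intro k
    induction k with
    | zero => simp
    | succ k ih =>
      rw [pow_succ, ← mul_assoc, ih, homega, mul_assoc, Finset.mul_sum, Finset.mul_sum]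
      have hterm : ∀ i : Fin n, α * ((∑ j ∈ A, c j) ^ k * c i) =
          (α * c i) * (∑ j ∈ A, c j) ^ k := by
        intro i
        rw [((hcomm i ((∑ j ∈ A, c j) ^ k)).symm).eq, ← mul_assoc, mul_assoc]
      simp only [hterm]
      rw [← Finset.sum_subset (Finset.subset_univ A)
        (by intro x _ hx
            rw [hA, Finset.mem_filter] at hx
            push_neg at hx
            rw [hann x (not_or.mpr ⟨(hx (Finset.mem_univ x)).1,
              by have := (hx (Finset.mem_univ x)).2; omega⟩), zero_mul])]
      rw [← Finset.sum_mul, ← Finset.mul_sum, mul_assoc, ← pow_succ']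
  rw [hstep, sum_sq_zero_pow A c (fun i j => hcomm i (c j)) hsq, mul_zero]
  have h1 : A.card ≤ (Finset.range (n - p - q + 1)).card := by
    apply Finset.card_le_card_of_injOn (fun i => if i.1 = 0 then 0 else i.1 - (p+q) + 1)
    · intro i hi
      rw [hA, Finset.coe_filter, Set.mem_setOf_eq] at hi
      rw [Finset.mem_coe, Finset.mem_range]
      beta_reduce
      have hi2 := i.2
      rcases hi.2 with h | h
      · rw [if_pos h]; omega
      · rw [if_neg (by omega)]; omega
    · intro i hi j hj hij
      rw [hA, Finset.coe_filter, Set.mem_setOf_eq] at hi hj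
      have hi2 := i.2
      have hj2 := j.2
      apply Fin.ext
      dsimp only at hij
      rcases hi.2 with h | h <;> rcases hj.2 with h' | h'
      · omega
      · rw [if_pos h, if_neg (by omega)] at hij; omega
      · rw [if_neg (by omega), if_pos h'] at hij; omega
      · rw [if_neg (by omega), if_neg (by omega)] at hij; omega
  rw [Finset.card_range] at h1
  omega

lemma part1 (n p q : ℕ) (hq : 2 ≤ q) (hpq : p + q ≤ n) :
    alpha18 n p q hq hpq ∈ V n p ((q:ℤ) - 1) := by
  classical
  set ft : Fin (q-1) → Fin n := fun j => ⟨j.1+1, by have := j.2; omega⟩ with hft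
  set fs : Fin p → Fin n := fun j => ⟨q+j.1, by have := j.2; omega⟩ with hfs
  have hndt : (List.ofFn ft).Nodup := List.nodup_ofFn.mpr (by
    intro a b hab
    rw [hft, Fin.ext_iff] at hab
    simp at hab
    exact Fin.ext (by omega))
  have hnds : (List.ofFn fs).Nodup := List.nodup_ofFn.mpr (by
    intro a b hab
    rw [hfs, Fin.ext_iff] at hab
    simp at hab
    exact Fin.ext (by omega))
  set s : Finset (Fin n) := (List.ofFn fs).toFinset with hs
  set t : Finset (Fin n) := (List.ofFn ft).toFinset with ht
  have hsort_s : s.sort (· ≤ ·) = List.ofFn fs := by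
    rw [hs]
    refine (List.toFinset_sort _ hnds).mpr ?_
    refine (List.sortedLE_ofFn_iff.mpr ?_).pairwise
    intro a b hab
    rw [hfs, Fin.le_def]
    simp
    omega
  have hsort_t : t.sort (· ≤ ·) = List.ofFn ft := by
    rw [ht]
    refine (List.toFinset_sort _ hndt).mpr ?_
    refine (List.sortedLE_ofFn_iff.mpr ?_).pairwise
    intro a b hab
    rw [hft, Fin.le_def]
    simp
    omega
  have hcards : s.card = p := by
    rw [hs, List.toFinset_card_of_nodup hnds, List.length_ofFn]
  have hcardt : t.card = q - 1 := by
    rw [ht, List.toFinset_card_of_nodup hndt, List.length_ofFn]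
  have key : alpha18 n p q hq hpq = ((-1 : ℂ)^((q-1)*p)) •
      (((s.sort (· ≤ ·)).map (dz n)).prod * ((t.sort (· ≤ ·)).map (dzbar n)).prod) := by
    rw [hsort_s, hsort_t]
    have e1 : (List.ofFn fun j : Fin (q-1) =>
        dzbar n (⟨j.1+1, by have := j.2; omega⟩ : Fin n)) =
        (List.ofFn fun j : Fin (q-1) => eVec n (Sum.inr (ft j))).map (ι ℂ) := by
      rw [List.map_ofFn]; rfl
    have e2 : (List.ofFn fun j : Fin p =>
        dz n (⟨q+j.1, by have := j.2; omega⟩ : Fin n)) =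
        (List.ofFn fun j : Fin p => eVec n (Sum.inl (fs j))).map (ι ℂ) := by
      rw [List.map_ofFn]; rfl
    have e3 : (List.ofFn fs).map (dz n) =
        (List.ofFn fun j : Fin p => eVec n (Sum.inl (fs j))).map (ι ℂ) := by
      rw [List.map_ofFn, List.map_ofFn]; rfl
    have e4 : (List.ofFn ft).map (dzbar n) =
        (List.ofFn fun j : Fin (q-1) => eVec n (Sum.inr (ft j))).map (ι ℂ) := by
      rw [List.map_ofFn, List.map_ofFn]; rfl
    unfold alpha18
    rw [e1, e2, e3, e4, prod_mul_prod_swap]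
    rw [List.length_ofFn, List.length_ofFn]
  rw [key]
  apply Submodule.smul_mem
  apply Submodule.subset_span
  refine ⟨s, t, ?_, ?_, rfl⟩
  · rw [hcards]
  · rw [hcardt]; push_cast; omega


def uTar (n p q : ℕ) (hq : 2 ≤ q) (hpq : p + q ≤ n) : List (Fin n ⊕ Fin n) :=
  aList n p q hq hpq ++ [Sum.inr (⟨0, Nat.lt_of_lt_of_le (Nat.lt_of_lt_of_le (by decide : 0 < 2) hq) (Nat.le_trans (Nat.le_add_left q p) hpq)⟩ : Fin n)]

lemma uTar_len (n p q : ℕ) (hq : 2 ≤ q) (hpq : p + q ≤ n) :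
    (uTar n p q hq hpq).length = p + q := by
  unfold uTar aList
  simp
  omega

def col (n p q : ℕ) (hq : 2 ≤ q) (hpq : p + q ≤ n) : Fin (p + q) → Fin n ⊕ Fin n :=
  fun k => (uTar n p q hq hpq).get (Fin.cast (uTar_len n p q hq hpq).symm k)

def phi (n p q : ℕ) (hq : 2 ≤ q) (hpq : p + q ≤ n) : Forms n →ₗ[ℂ] ℂ :=
  ExteriorAlgebra.liftAlternating (Pi.single (p + q)
    ((Matrix.detRowAlternating).compLinearMap (LinearMap.funLeft ℂ ℂ (col n p q hq hpq))))

lemma phi_eval (n p q : ℕ) (hq : 2 ≤ q) (hpq : p + q ≤ n)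
    (u : List (Fin n ⊕ Fin n)) (hlen : u.length = p + q) :
    phi n p q hq hpq (((u.map (eVec n)).map (ι ℂ)).prod) =
      Matrix.det (Matrix.of fun j k : Fin (p + q) =>
        eVec n (u.get (Fin.cast hlen.symm j)) (col n p q hq hpq k)) := by
  have h1 : ((u.map (eVec n)).map (ι ℂ)).prod =
      ExteriorAlgebra.ιMulti ℂ (p + q)
        (fun j : Fin (p + q) => eVec n (u.get (Fin.cast hlen.symm j))) := by
    rw [ExteriorAlgebra.ιMulti_apply, List.map_map]
    rw [show (List.map ((ι ℂ) ∘ eVec n) u) =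
        List.ofFn (fun i : Fin u.length => ((ι ℂ) ∘ eVec n) (u.get i)) from
      (List.ofFn_getElem_eq_map u ((ι ℂ) ∘ eVec n)).symm]
    rw [List.ofFn_congr hlen]
    rfl
  rw [h1, phi]
  rw [ExteriorAlgebra.liftAlternating_apply_ιMulti]
  rw [Pi.single_eq_same]
  rfl

lemma col_mem (n p q : ℕ) (hq : 2 ≤ q) (hpq : p + q ≤ n) (k : Fin (p + q)) :
    col n p q hq hpq k ∈ uTar n p q hq hpq := List.get_mem _ _

lemma col_ne_inl (n p q : ℕ) (hq : 2 ≤ q) (hpq : p + q ≤ n) (i : Fin n) (hi : i.1 < q)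
    (k : Fin (p + q)) : col n p q hq hpq k ≠ Sum.inl i := by
  have hmem := col_mem n p q hq hpq k
  unfold uTar aList at hmem
  intro h
  rw [h] at hmem
  simp only [List.mem_append, List.mem_ofFn, List.mem_singleton] at hmem
  rcases hmem with (⟨j, hj⟩ | ⟨j, hj⟩) | hj
  · exact absurd hj (by simp)
  · rw [Sum.inl.injEq, Fin.ext_iff] at hj
    simp at hj
    omega
  · exact absurd hj (by simp)

lemma col_ne_inr (n p q : ℕ) (hq : 2 ≤ q) (hpq : p + q ≤ n) (i : Fin n) (hi : q ≤ i.1)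
    (k : Fin (p + q)) : col n p q hq hpq k ≠ Sum.inr i := by
  have hmem := col_mem n p q hq hpq k
  unfold uTar aList at hmem
  intro h
  rw [h] at hmem
  simp only [List.mem_append, List.mem_ofFn, List.mem_singleton] at hmem
  rcases hmem with (⟨j, hj⟩ | ⟨j, hj⟩) | hj
  · rw [Sum.inr.injEq, Fin.ext_iff] at hj
    simp at hj
    have := j.2
    omega
  · exact absurd hj (by simp)
  · rw [Sum.inr.injEq, Fin.ext_iff] at hj
    simp at hj
    omega

lemma uTar_nodup (n p q : ℕ) (hq : 2 ≤ q) (hpq : p + q ≤ n) :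
    (uTar n p q hq hpq).Nodup := by
  unfold uTar aList
  rw [List.append_assoc]
  rw [List.nodup_append]
  refine ⟨?_, ?_, ?_⟩
  · refine List.nodup_ofFn.mpr ?_
    intro a b hab
    simp only [Sum.inr.injEq, Fin.ext_iff] at hab
    simp at hab
    exact Fin.ext (by omega)
  · rw [List.nodup_append]
    refine ⟨?_, List.nodup_singleton _, ?_⟩
    · refine List.nodup_ofFn.mpr ?_
      intro a b hab
      simp only [Sum.inl.injEq, Fin.ext_iff] at hab
      simp at hab
      exact Fin.ext (by omega)
    · intro x hx y hy hxy
      rw [← hxy] at hy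
      rw [List.mem_ofFn] at hx
      rw [List.mem_singleton] at hy
      obtain ⟨j, rfl⟩ := hx
      simp at hy
  · intro x hx y hy hxy
    rw [← hxy] at hy
    rw [List.mem_ofFn] at hx
    obtain ⟨j, rfl⟩ := hx
    rw [List.mem_append, List.mem_ofFn, List.mem_singleton] at hy
    rcases hy with ⟨j', hj'⟩ | hj'
    · simp at hj'
    · rw [Sum.inr.injEq, Fin.ext_iff] at hj'
      simp at hj'

lemma phi_target (n p q : ℕ) (hq : 2 ≤ q) (hpq : p + q ≤ n) :
    phi n p q hq hpq (alpha18 n p q hq hpq * dzbar n ⟨0, Nat.lt_of_lt_of_le (Nat.lt_of_lt_of_le (by decide : 0 < 2) hq) (Nat.le_trans (Nat.le_add_left q p) hpq)⟩) = 1 := by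
  have heq : alpha18 n p q hq hpq * dzbar n ⟨0, by omega⟩ =
      (((uTar n p q hq hpq).map (eVec n)).map (ι ℂ)).prod := by
    rw [alpha_eq]
    unfold uTar
    rw [List.map_append, List.map_append, List.prod_append]
    simp only [List.map_singleton, List.prod_singleton]
    rfl
  rw [heq, phi_eval n p q hq hpq _ (uTar_len n p q hq hpq)]
  have hinj : Function.Injective
      (fun j : Fin (p+q) => (uTar n p q hq hpq).get (Fin.cast (uTar_len n p q hq hpq).symm j)) := by
    intro a b hab
    have h2 := List.nodup_iff_injective_get.mp (uTar_nodup n p q hq hpq) hab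
    exact Fin.cast_injective _ h2
  have hmat : (Matrix.of fun j k : Fin (p + q) =>
      eVec n ((uTar n p q hq hpq).get (Fin.cast (uTar_len n p q hq hpq).symm j))
        (col n p q hq hpq k)) = (1 : Matrix (Fin (p+q)) (Fin (p+q)) ℂ) := by
    ext j k
    rw [Matrix.of_apply, Matrix.one_apply]
    unfold col eVec
    rw [Pi.single_apply]
    by_cases h : j = k
    · rw [if_pos (by rw [h]), if_pos h]
    · rw [if_neg (fun hc => h (hinj hc).symm), if_neg h]
  rw [hmat, Matrix.det_one]

lemma phi_omega_mul (n p q : ℕ) (hq : 2 ≤ q) (hpq : p + q ≤ n)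
    (x : Forms n) (hx : x ∈ V n ((p:ℤ) - 1) ((q:ℤ) - 1)) :
    phi n p q hq hpq (omega0 n * x) = 0 := by
  induction hx using Submodule.span_induction with
  | mem x hmem =>
    obtain ⟨s, t, hsc, htc, rfl⟩ := hmem
    have hsc' : s.card + 1 = p := by omega
    have htc' : t.card + 1 = q := by omega
    set ls : List (Fin n ⊕ Fin n) :=
      (s.sort (· ≤ ·)).map Sum.inl ++ (t.sort (· ≤ ·)).map Sum.inr with hls
    have hx_eq : ((s.sort (· ≤ ·)).map (dz n)).prod * ((t.sort (· ≤ ·)).map (dzbar n)).prod =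
        ((ls.map (eVec n)).map (ι ℂ)).prod := by
      rw [hls, List.map_map, List.map_append, List.map_map, List.map_map, List.prod_append]
      rfl
    rw [hx_eq]
    rw [show omega0 n = ∑ i, Complex.I • (dz n i * dzbar n i) from rfl, Finset.sum_mul,
      map_sum]
    apply Finset.sum_eq_zero
    intro i _
    rw [smul_mul_assoc, map_smul]
    have hlen : (Sum.inl i :: Sum.inr i :: ls).length = p + q := by
      rw [hls]
      simp
      omega
    have hprod : dz n i * dzbar n i * ((ls.map (eVec n)).map (ι ℂ)).prod =
        (((Sum.inl i :: Sum.inr i :: ls).map (eVec n)).map (ι ℂ)).prod := by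
      rw [List.map_cons, List.map_cons, List.map_cons, List.map_cons, List.prod_cons,
        List.prod_cons, ← mul_assoc]
      rfl
    rw [hprod, phi_eval n p q hq hpq _ hlen]
    rcases Nat.lt_or_ge i.1 q with hiq | hiq
    · rw [Matrix.det_eq_zero_of_row_eq_zero (⟨0, by omega⟩ : Fin (p+q))]
      · simp
      · intro k
        rw [Matrix.of_apply]
        have hget : (Sum.inl i :: Sum.inr i :: ls).get
            (Fin.cast hlen.symm (⟨0, by omega⟩ : Fin (p+q))) = Sum.inl i := rfl
        rw [hget]
        unfold eVec
        rw [Pi.single_apply, if_neg (col_ne_inl n p q hq hpq i hiq k)]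
    · rw [Matrix.det_eq_zero_of_row_eq_zero (⟨1, by omega⟩ : Fin (p+q))]
      · simp
      · intro k
        rw [Matrix.of_apply]
        have hget : (Sum.inl i :: Sum.inr i :: ls).get
            (Fin.cast hlen.symm (⟨1, by omega⟩ : Fin (p+q))) = Sum.inr i := rfl
        rw [hget]
        unfold eVec
        rw [Pi.single_apply, if_neg (col_ne_inr n p q hq hpq i hiq k)]
  | zero => rw [mul_zero, map_zero]
  | add a b _ _ ha hb => rw [mul_add, map_add, ha, hb, add_zero]
  | smul a x _ hx => rw [mul_smul_comm, map_smul, hx, smul_zero]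

theorem part3 (n p q : ℕ) (hq : 2 ≤ q) (hpq : p + q ≤ n) :
    ¬ ∃ β ∈ V n ((p:ℤ) - 1) ((q:ℤ) - 1),
        alpha18 n p q hq hpq * dzbar n ⟨0, Nat.lt_of_lt_of_le (Nat.lt_of_lt_of_le (by decide : 0 < 2) hq) (Nat.le_trans (Nat.le_add_left q p) hpq)⟩ = omega0 n * β := by
  rintro ⟨β, hβ, heq⟩
  have h1 := phi_target n p q hq hpq
  rw [heq, phi_omega_mul n p q hq hpq β hβ] at h1
  exact one_ne_zero h1.symm


/-- **The computation in the proof of Lemma 2.3.** With the standard coordinates and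
`ω = i dz₁∧dz̄₁ + ⋯ + i dzₙ∧dz̄ₙ`, `q ≥ 2`, `p + q ≤ n`, the form
`α := dz̄₂ ∧ … ∧ dz̄_q ∧ dz_{q+1} ∧ … ∧ dz_{p+q}` lies in `V^{p,q-1}`, is primitive
(`α ∧ ω^{n-p-q+2} = 0`), and `α ∧ dz̄₁` does not belong to `ω ∧ V^{p-1,q-1}`. -/
theorem primitive_form_not_divisible
    (n p q : ℕ) (hq : 2 ≤ q) (hpq : p + q ≤ n) :
    alpha18 n p q hq hpq ∈ V n p ((q:ℤ) - 1) ∧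
    alpha18 n p q hq hpq * omega0 n ^ (n - p - q + 2) = 0 ∧
    ¬ ∃ β ∈ V n ((p:ℤ) - 1) ((q:ℤ) - 1),
        alpha18 n p q hq hpq * dzbar n ⟨0, by omega⟩ = omega0 n * β := by
  exact ⟨part1 n p q hq hpq, part2 n p q hq hpq, part3 n p q hq hpq⟩

end DNHodge
end
end
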